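/- arXiv:1410.5215 — 5 statements merged into one kernel-verified Lean document; each statement's English description precedes it below -/
import Mathlib

section
/- Let (G, M, I) be a formal context, A ⊆ M, B ∈ MC_A, and c ∈ B'' \ A. Then the implication B → c holds in the context, its support (B ∪ {c})' is nonempty, and it is not respected by A (i.e. B ⊆ A but c ∉ A). -/
namespace FCA

variable {G M : Type*}

/-- The intent `g'` of an object `g`: the set of attributes it has. -/
def intent [Fintype M] (I : G → M → Prop) [∀ g m, Decidable (I g m)] (g : G) : Finset M :=
  Finset.univ.filter (fun m => I g m)

/-- The extent `A'` of a set of attributes `A`. -/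
def extent [Fintype G] (I : G → M → Prop) [∀ g m, Decidable (I g m)] (A : Finset M) :
    Finset G :=
  Finset.univ.filter (fun g => ∀ m ∈ A, I g m)

/-- The closure `A''` of a set of attributes `A`. -/
def closure [Fintype G] [Fintype M] (I : G → M → Prop) [∀ g m, Decidable (I g m)]
    (A : Finset M) : Finset M :=
  Finset.univ.filter (fun m => ∀ g ∈ extent I A, I g m)

/-- `C_A = {A ∩ g' | g ∈ G}`. -/
def CA [Fintype G] [Fintype M] [DecidableEq M] (I : G → M → Prop) [∀ g m, Decidable (I g m)]
    (A : Finset M) : Finset (Finset M) :=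
  Finset.univ.image (fun g => A ∩ intent I g)

/-- `MC_A`: the maximal elements of `C_A`. -/
def MCA [Fintype G] [Fintype M] [DecidableEq M] (I : G → M → Prop) [∀ g m, Decidable (I g m)]
    (A : Finset M) : Finset (Finset M) :=
  (CA I A).filter (fun B => ∀ C ∈ CA I A, ¬ B ⊂ C)

/-- for `B ∈ MC_A` and `c ∈ B'' \ A`, the implication `B → c` holds
in the context, its support `(B ∪ {c})'` is nonempty, and it is not respected by `A`
(i.e. `B ⊆ A` but `c ∉ A`). -/
theorem stmt0 [Fintype G] [Fintype M] [DecidableEq M] (I : G → M → Prop)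
    [∀ g m, Decidable (I g m)] (A B : Finset M) (c : M)
    (hB : B ∈ MCA I A) (hc : c ∈ closure I B \ A) :
    extent I B ⊆ extent I {c} ∧
    (extent I (B ∪ {c})).Nonempty ∧
    B ⊆ A ∧ c ∉ A := by
  simp only [MCA, CA, Finset.mem_filter, Finset.mem_image, Finset.mem_univ, true_and] at hB
  obtain ⟨⟨g, hg⟩, _⟩ := hB
  simp only [closure, Finset.mem_sdiff, Finset.mem_filter, Finset.mem_univ, true_and] at hc
  obtain ⟨hcc, hcA⟩ := hc
  have hBA : B ⊆ A := by rw [← hg]; exact Finset.inter_subset_left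
  have hgB : g ∈ extent I B := by
    simp only [extent, Finset.mem_filter, Finset.mem_univ, true_and]
    intro m hm
    rw [← hg] at hm
    have := Finset.inter_subset_right hm
    simpa [intent] using this
  refine ⟨?_, ⟨g, ?_⟩, hBA, hcA⟩
  · intro x hx
    simp only [extent, Finset.mem_filter, Finset.mem_univ, true_and] at *
    intro m hm
    rw [Finset.mem_singleton] at hm
    subst hm
    exact hcc x hx
  · simp only [extent, Finset.mem_filter, Finset.mem_univ, true_and, Finset.mem_union,
      Finset.mem_singleton] at *
    rintro m (hm | rfl)
    · exact hgB m hm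
    · exact hcc g (by simpa [extent] using hgB)

end FCA
end

section
/- Let (G, M, I) be a formal context, A ⊆ M, B ∈ MC_A, and c ∈ A \ B. Then the negative implication B → c̄ holds in the context (every g ∈ G with B ⊆ g' satisfies c ∉ g'), its support {g ∈ G | B ⊆ g' and c ∉ g'} is nonempty, and it is not respected by A (i.e. B ⊆ A and c ∈ A). -/
namespace FCA

variable {G M : Type*}

/-- for `B ∈ MC_A` and `c ∈ A \ B`, the negative implication `B → c̄`
holds in the context, its support is nonempty, and it is not respected by `A`
(i.e. `B ⊆ A` and `c ∈ A`). -/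
theorem stmt1 [Fintype G] [Fintype M] [DecidableEq M] (I : G → M → Prop)
    [∀ g m, Decidable (I g m)] (A B : Finset M) (c : M)
    (hB : B ∈ MCA I A) (hc : c ∈ A \ B) :
    (∀ g : G, B ⊆ intent I g → c ∉ intent I g) ∧
    (Finset.univ.filter (fun g : G => B ⊆ intent I g ∧ c ∉ intent I g)).Nonempty ∧
    B ⊆ A ∧ c ∈ A := by
  simp only [MCA, Finset.mem_filter, CA, Finset.mem_image, Finset.mem_univ, true_and] at hB
  obtain ⟨⟨g0, hg0⟩, hmax⟩ := hB
  simp only [Finset.mem_sdiff] at hc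
  obtain ⟨hcA, hcB⟩ := hc
  have hBA : B ⊆ A := by rw [← hg0]; exact Finset.inter_subset_left
  have key : ∀ g : G, B ⊆ intent I g → c ∉ intent I g := by
    intro g hBg hcg
    apply hmax (A ∩ intent I g) ⟨g, rfl⟩
    constructor
    · intro x hx
      exact Finset.mem_inter.2 ⟨hBA hx, hBg hx⟩
    · intro hsub
      exact hcB (hsub (Finset.mem_inter.2 ⟨hcA, hcg⟩))
  refine ⟨key, ⟨g0, ?_⟩, hBA, hcA⟩
  have hBg0 : B ⊆ intent I g0 := by rw [← hg0]; exact Finset.inter_subset_right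
  simp only [Finset.mem_filter, Finset.mem_univ, true_and]
  exact ⟨hBg0, key g0 hBg0⟩

end FCA
end

section
/- Let (G, M, I) be a formal context and A ⊆ M. If an implication E → d with E ⊆ A and d ∈ M \ A holds in the context and has nonempty support (there exists g ∈ G with E ⊆ g' and d ∈ g'), then there exists B ∈ MC_A such that E ⊆ B ⊆ A and d ∈ B'' \ A. -/
/-!
Take an object `g` with `E ⊆ g'` (it exists by the support hypothesis) and enlarge `A ∩ g'`
to a maximal element `B` of `C_A`. Then `E ⊆ A ∩ g' ⊆ B ⊆ A`, so `B' ⊆ E' ⊆ d'`, i.e. `d ∈ B''`.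
-/

namespace FCA

variable {G M : Type*}

section

variable [Fintype G] (I : G → M → Prop) [∀ g m, Decidable (I g m)]

theorem mem_extent {A : Finset M} {g : G} : g ∈ extent I A ↔ ∀ m ∈ A, I g m := by
  simp [extent]

theorem extent_anti {A B : Finset M} (h : A ⊆ B) : extent I B ⊆ extent I A := fun _ hg =>
  (mem_extent I).2 fun m hm => (mem_extent I).1 hg m (h hm)

variable [Fintype M]

theorem mem_closure_iff_extent_subset {A : Finset M} {m : M} :
    m ∈ closure I A ↔ extent I A ⊆ extent I {m} := by
  simp [closure, Finset.subset_iff, mem_extent]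

variable [DecidableEq M]

theorem inter_intent_mem_CA (A : Finset M) (g : G) : A ∩ intent I g ∈ CA I A :=
  Finset.mem_image_of_mem _ (Finset.mem_univ g)

theorem subset_of_mem_CA {A B : Finset M} (hB : B ∈ CA I A) : B ⊆ A := by
  obtain ⟨g, -, rfl⟩ := Finset.mem_image.1 hB
  exact Finset.inter_subset_left

theorem mem_MCA_iff {A B : Finset M} : B ∈ MCA I A ↔ Maximal (· ∈ CA I A) B := by
  rw [MCA, Finset.mem_filter, maximal_iff_forall_gt]
  exact and_congr_right' ⟨fun h _ hBC hC => h _ hC hBC, fun h _ hC hBC => h hBC hC⟩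

theorem exists_mem_MCA_superset {A C : Finset M} (hC : C ∈ CA I A) :
    ∃ B ∈ MCA I A, C ⊆ B := by
  obtain ⟨B, hCB, hB⟩ := (CA I A).exists_le_maximal hC
  exact ⟨B, (mem_MCA_iff I).2 hB, hCB⟩

end

/-- if an implication `E → d` with `E ⊆ A` and `d ∈ M \ A` holds in the
context and has nonempty support, then there exists `B ∈ MC_A` with `E ⊆ B ⊆ A`
and `d ∈ B'' \ A`. -/
theorem stmt2 [Fintype G] [Fintype M] [DecidableEq M] (I : G → M → Prop)
    [∀ g m, Decidable (I g m)] (A E : Finset M) (d : M)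
    (hE : E ⊆ A) (hd : d ∉ A)
    (hvalid : extent I E ⊆ extent I {d})
    (hsupp : ∃ g : G, E ⊆ intent I g ∧ d ∈ intent I g) :
    ∃ B ∈ MCA I A, E ⊆ B ∧ B ⊆ A ∧ d ∈ closure I B \ A := by
  obtain ⟨g, hgE, -⟩ := hsupp
  obtain ⟨B, hB, hgB⟩ := exists_mem_MCA_superset I (inter_intent_mem_CA I A g)
  have hEB : E ⊆ B := (Finset.subset_inter hE hgE).trans hgB
  have hdB : d ∈ closure I B :=
    (mem_closure_iff_extent_subset I).2 ((extent_anti I hEB).trans hvalid)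
  exact ⟨B, hB, hEB, subset_of_mem_CA I ((mem_MCA_iff I).1 hB).prop,
    Finset.mem_sdiff.2 ⟨hdB, hd⟩⟩

end FCA
end

section
/- Let (G, M, I) be a formal context and A ⊆ M. If a negative implication E → c̄ with E ⊆ A and c ∈ A holds in the context and has nonempty support (there exists g ∈ G with E ⊆ g' and c ∉ g'), then there exists B ∈ MC_A such that E ⊆ B ⊆ A and c ∈ A \ B. -/
namespace FCA

variable {G M : Type*}

/-- if a negative implication `E → c̄` with `E ⊆ A` and `c ∈ A` holds in
the context and has nonempty support, then there exists `B ∈ MC_A` with `E ⊆ B ⊆ A`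
and `c ∈ A \ B`. -/
theorem stmt3 [Fintype G] [Fintype M] [DecidableEq M] (I : G → M → Prop)
    [∀ g m, Decidable (I g m)] (A E : Finset M) (c : M)
    (hE : E ⊆ A) (hc : c ∈ A)
    (hvalid : ∀ g : G, E ⊆ intent I g → c ∉ intent I g)
    (hsupp : ∃ g : G, E ⊆ intent I g ∧ c ∉ intent I g) :
    ∃ B ∈ MCA I A, E ⊆ B ∧ B ⊆ A ∧ c ∈ A \ B := by
  obtain ⟨g, hg, hgc⟩ := hsupp
  -- consider the set of elements of CA containing A ∩ g'
  set S := (CA I A).filter (fun C => A ∩ intent I g ⊆ C) with hS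
  have hne : S.Nonempty := ⟨A ∩ intent I g, by
    simp [hS, CA]⟩
  obtain ⟨B, hBS, hBmax⟩ := Finset.exists_max_image S (fun C => C.card) hne
  simp only [hS, Finset.mem_filter] at hBS
  obtain ⟨hBCA, hBsub⟩ := hBS
  have hmax : ∀ C ∈ CA I A, ¬ B ⊂ C := by
    intro C hC hBC
    have hCS : C ∈ S := by
      simp only [hS, Finset.mem_filter]
      exact ⟨hC, hBsub.trans hBC.subset⟩
    exact absurd (hBmax C hCS) (not_le.mpr (Finset.card_lt_card hBC))
  obtain ⟨h, hh⟩ := Finset.mem_image.mp hBCA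
  have hBA : B ⊆ A := by rw [← hh.2]; exact Finset.inter_subset_left
  have hEB : E ⊆ B := fun x hx => hBsub (Finset.mem_inter.mpr ⟨hE hx, hg hx⟩)
  have hEh : E ⊆ intent I h := fun x hx => (Finset.mem_inter.mp (hh.2 ▸ hEB hx)).2
  have hcB : c ∉ B := fun hcB => hvalid h hEh (Finset.mem_inter.mp (hh.2 ▸ hcB)).2
  exact ⟨B, Finset.mem_filter.mpr ⟨hBCA, hmax⟩, hEB, hBA, Finset.mem_sdiff.mpr ⟨hc, hcB⟩⟩

end FCA
end

section
/- Let (G, M, I) be a formal context, let A1, A2 ⊆ M, and let K1 be the context obtained from (G, M, I) by adjoining a new object g1 (not in G) whose intent is A1 (i.e. g1' = A1 in K1). If there exists g ∈ G with A1 ∩ A2 ⊆ g', then no new A2-crucial implications arise: I_{A2}^{K1} ⊆ I_{A2}^{K}, where I_A^{K} = {(B, c) | B ∈ MC_A computed in K, c ∈ (B'' \ A) ∪ (A \ B) with B'' computed in K}. -/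
namespace FCA

variable {G M : Type*}

/-- The set of `A`-crucial implications, encoded as pairs `(B, c)`:
`c ∈ B'' \ A` encodes the implication `B → c` and `c ∈ A \ B` encodes the
negative implication `B → c̄`. -/
def crucial [Fintype G] [Fintype M] [DecidableEq M] (I : G → M → Prop)
    [∀ g m, Decidable (I g m)] (A : Finset M) : Finset (Finset M × M) :=
  Finset.univ.filter
    (fun p => p.1 ∈ MCA I A ∧ p.2 ∈ (closure I p.1 \ A) ∪ (A \ p.1))

/-- The incidence relation of the context `K1` obtained from `(G, M, I)` by adjoining
a new object (represented by `none : Option G`) whose intent is `A1`. -/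
def extRel (I : G → M → Prop) (A1 : Finset M) [DecidableEq M] : Option G → M → Prop :=
  fun g m => g.elim (m ∈ A1) (fun h => I h m)

instance (I : G → M → Prop) [∀ g m, Decidable (I g m)] [DecidableEq M] (A1 : Finset M) :
    ∀ g m, Decidable (extRel I A1 g m) := fun g m => by
  cases g <;> unfold extRel <;> dsimp <;> infer_instance

/-! Adjoining the object `g1` only adds `A2 ∩ A1` to `C_{A2}`, and this set lies below the old
member `A2 ∩ g'`; so a maximal member of the new `C_{A2}` is an old one and is still maximal.
Meanwhile extents can only grow, so closures can only shrink. -/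

@[simp]
lemma intent_extRel_some [Fintype M] [DecidableEq M] (I : G → M → Prop)
    [∀ g m, Decidable (I g m)] (A1 : Finset M) (g : G) :
    intent (extRel I A1) (some g) = intent I g := rfl

@[simp]
lemma intent_extRel_none [Fintype M] [DecidableEq M] (I : G → M → Prop)
    [∀ g m, Decidable (I g m)] (A1 : Finset M) :
    intent (extRel I A1) (none : Option G) = A1 := by
  ext m
  simp only [intent, Finset.mem_filter, Finset.mem_univ, true_and]
  rfl

lemma CA_extRel [Fintype G] [Fintype M] [DecidableEq M] (I : G → M → Prop)
    [∀ g m, Decidable (I g m)] (A1 A : Finset M) :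
    CA (extRel I A1) A = insert (A ∩ A1) (CA I A) := by
  ext B
  simp [CA, Option.exists, eq_comm]

lemma closure_extRel_subset [Fintype G] [Fintype M] [DecidableEq M] (I : G → M → Prop)
    [∀ g m, Decidable (I g m)] (A1 B : Finset M) :
    closure (extRel I A1) B ⊆ closure I B := by
  intro c hc
  simp only [closure, extent, Finset.mem_filter, Finset.mem_univ, true_and] at hc ⊢
  exact fun g hg => hc (some g) hg

lemma _root_.Finset.mem_of_maximal_insert {α : Type*} [DecidableEq α] [PartialOrder α]
    {s : Finset α} {x y b : α} (hy : y ∈ s) (hxy : x ≤ y) (hb : b ∈ insert x s)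
    (hmax : ∀ c ∈ insert x s, ¬ b < c) : b ∈ s := by
  rcases Finset.mem_insert.mp hb with rfl | hb
  · obtain rfl : b = y := of_not_not fun hne => hmax y (Finset.mem_insert_of_mem hy)
      (hxy.lt_of_ne hne)
    exact hy
  · exact hb

lemma MCA_extRel_subset [Fintype G] [Fintype M] [DecidableEq M] (I : G → M → Prop)
    [∀ g m, Decidable (I g m)] (A1 A : Finset M) (h : ∃ g : G, A1 ∩ A ⊆ intent I g) :
    MCA (extRel I A1) A ⊆ MCA I A := by
  obtain ⟨g, hg⟩ := h
  have hle : A ∩ A1 ⊆ A ∩ intent I g :=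
    Finset.subset_inter Finset.inter_subset_left (Finset.inter_comm A A1 ▸ hg)
  have hmem : A ∩ intent I g ∈ CA I A := Finset.mem_image_of_mem _ (Finset.mem_univ g)
  intro B hB
  simp only [MCA, CA_extRel, Finset.mem_filter] at hB ⊢
  exact ⟨Finset.mem_of_maximal_insert hmem hle hB.1 hB.2,
    fun C hC => hB.2 C (Finset.mem_insert_of_mem hC)⟩

/-- if some old object `g ∈ G` satisfies `A1 ∩ A2 ⊆ g'`, then adjoining a
new object with intent `A1` creates no new `A2`-crucial implications:
`I_{A2}^{K1} ⊆ I_{A2}^{K}`. -/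
theorem stmt7 [Fintype G] [Fintype M] [DecidableEq M] (I : G → M → Prop)
    [∀ g m, Decidable (I g m)] (A1 A2 : Finset M)
    (h : ∃ g : G, A1 ∩ A2 ⊆ intent I g) :
    crucial (extRel I A1) A2 ⊆ crucial I A2 := by
  intro p hp
  simp only [crucial, Finset.mem_filter, Finset.mem_univ, true_and] at hp ⊢
  exact ⟨MCA_extRel_subset I A1 A2 h hp.1,
    Finset.union_subset_union
      (Finset.sdiff_subset_sdiff (closure_extRel_subset I A1 p.1) le_rfl) le_rfl hp.2⟩

end FCA
end
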